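/- A tournament G contains no copy of X_4 if and only if every strongly connected component of G has at most three vertices (equivalently, every strongly connected component is a single vertex or induces a directed triangle). -/

import Mathlib

/-- A tournament: a directed graph in which, for every pair of distinct vertices,
exactly one of the two possible directed edges is present, and there are no loops. -/
def IsTournament {V : Type*} (r : V → V → Prop) : Prop :=
  (∀ v, ¬ r v v) ∧ ∀ u v : V, u ≠ v → (r u v ↔ ¬ r v u)

/-- `X₄`, the (unique up to isomorphism) strongly connected tournament on four vertices:
`0 → 1 → 2 → 3 → 0` together with `0 → 2` and `1 → 3`. -/
def X4rel : Fin 4 → Fin 4 → Prop := fun i j =>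
  (i = 0 ∧ j = 1) ∨ (i = 1 ∧ j = 2) ∨ (i = 2 ∧ j = 3) ∨ (i = 3 ∧ j = 0) ∨
  (i = 0 ∧ j = 2) ∨ (i = 1 ∧ j = 3)

/-!
A copy of `X₄` carries the Hamiltonian cycle `0 → 1 → 2 → 3 → 0`, so its four vertices lie in one
strong component. Conversely, in a tournament every closed walk `a → b → c → d → a` induces `X₄`:
rotate it so that both chords point forward.

A strong component with at least four vertices contains a 3-cycle `a → x → y → a` and a fourth
vertex `d`. If `s → d → t` for two consecutive triangle vertices `s → t`, this closes a 4-cycle.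
Otherwise `d` is dominated by the whole triangle or dominates it; in the first case follow a path
from `d` back to `a` up to its first edge `p → q` leaving the set of vertices dominated by the
triangle: `q` beats some triangle vertex `t`, and `p → q → t → t' → p` where `t'` follows `t` on
the triangle. The second case is the first one for the reversed tournament.
-/

open Relation Function

section

variable {α V : Type*}

def ContainsCopy (s : α → α → Prop) (r : V → V → Prop) : Prop :=
  ∃ t : Set V, ∃ e : α ≃ t, ∀ i j, s i j ↔ r (e i) (e j)

def strongComponent (r : V → V → Prop) (v : V) : Set V :=
  {u | ReflTransGen r u v ∧ ReflTransGen r v u}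

def HasFourCycle (r : V → V → Prop) : Prop :=
  ∃ a b c d, r a b ∧ r b c ∧ r c d ∧ r d a

theorem isTournament_X4rel : IsTournament X4rel := by
  unfold IsTournament X4rel
  decide

theorem X4rel_add_one (i : Fin 4) : X4rel i (i + 1) := by
  revert i
  unfold X4rel
  decide

namespace Relation

variable {r : V → V → Prop}

open Fin.NatCast in
theorem reflTransGen_of_forall_rel_add_one {n : ℕ} [NeZero n] {f : Fin n → V}
    (hf : ∀ i, r (f i) (f (i + 1))) (i j : Fin n) : ReflTransGen r (f i) (f j) := by
  have hk : ∀ k : ℕ, ReflTransGen r (f i) (f (i + (k : Fin n))) := by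
    intro k
    induction k with
    | zero => simpa using ReflTransGen.refl
    | succ k ih => exact ih.tail (by simpa [add_assoc] using hf (i + (k : Fin n)))
  simpa using hk (j - i).val

theorem ReflTransGen.exists_rel_of_not {P : V → Prop} {a b : V} (h : ReflTransGen r a b)
    (ha : P a) (hb : ¬ P b) : ∃ p q, P p ∧ ¬ P q ∧ r p q := by
  induction h with
  | refl => exact absurd ha hb
  | @tail c d _ hcd ih =>
    by_cases hc : P c
    · exact ⟨c, d, hc, hb, hcd⟩
    · exact ih hc

end Relation

theorem ContainsCopy.exists_card_le_ncard_strongComponent [Finite V] [Nonempty α]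
    {s : α → α → Prop} {r : V → V → Prop} (h : ContainsCopy s r)
    (hs : ∀ i j, ReflTransGen s i j) : ∃ v, Nat.card α ≤ (strongComponent r v).ncard := by
  obtain ⟨t, e, he⟩ := h
  have path : ∀ i j, ReflTransGen r (e i) (e j) := fun i j =>
    ReflTransGen.lift (fun i => (e i : V)) (fun i j hij => (he i j).1 hij) i j (hs i j)
  let i₀ := Classical.arbitrary α
  refine ⟨e i₀, ?_⟩
  rw [← Nat.card_coe_set_eq]
  refine Nat.card_le_card_of_injective (fun i => ⟨e i, path i i₀, path i₀ i⟩) ?_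
  intro i j hij
  exact e.injective (Subtype.ext (congrArg Subtype.val hij :))

namespace IsTournament

variable {r : V → V → Prop} (hr : IsTournament r)
include hr

theorem irrefl (v : V) : ¬ r v v :=
  hr.1 v

theorem ne_of_rel {u w : V} (h : r u w) : u ≠ w := by
  rintro rfl
  exact hr.irrefl u h

theorem asymm {u w : V} (h : r u w) : ¬ r w u :=
  (hr.2 u w (hr.ne_of_rel h)).1 h

theorem rel_of_not_rel {u w : V} (hne : u ≠ w) (h : ¬ r u w) : r w u :=
  (hr.2 w u hne.symm).2 h

theorem swap : IsTournament (swap r) :=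
  ⟨hr.1, fun u w hne => hr.2 w u hne.symm⟩

theorem rel_or_rel {u w : V} (hne : u ≠ w) : r u w ∨ r w u := by
  by_cases h : r u w
  · exact Or.inl h
  · exact Or.inr (hr.rel_of_not_rel hne h)

theorem injective_of_map_rel {s : α → α → Prop} (hs : IsTournament s) {f : α → V}
    (hf : ∀ i j, s i j → r (f i) (f j)) : Injective f := by
  intro i j hij
  by_contra hne
  rcases hs.rel_or_rel hne with h | h
  · exact hr.irrefl (f j) (hij ▸ hf i j h)
  · exact hr.irrefl (f j) (hij ▸ hf j i h)

theorem map_rel_iff_of_map_rel {s : α → α → Prop} (hs : IsTournament s) {f : α → V}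
    (hf : ∀ i j, s i j → r (f i) (f j)) (i j : α) : s i j ↔ r (f i) (f j) := by
  refine ⟨hf i j, fun h => ?_⟩
  by_contra hn
  by_cases hij : i = j
  · subst hij
    exact hr.irrefl _ h
  · exact hr.asymm h (hf j i (hs.rel_of_not_rel hij hn))

theorem containsCopy_of_map_rel {s : α → α → Prop} (hs : IsTournament s) {f : α → V}
    (hf : ∀ i j, s i j → r (f i) (f j)) : ContainsCopy s r :=
  ⟨Set.range f, Equiv.ofInjective f (hr.injective_of_map_rel hs hf),
    hr.map_rel_iff_of_map_rel hs hf⟩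

theorem containsCopy_X4rel_of_chords {a b c d : V} (hab : r a b) (hbc : r b c) (hcd : r c d)
    (hda : r d a) (hac : r a c) (hbd : r b d) : ContainsCopy X4rel r := by
  refine hr.containsCopy_of_map_rel isTournament_X4rel (f := ![a, b, c, d]) ?_
  intro i j h
  fin_cases i <;> fin_cases j <;> simp_all [X4rel]

theorem containsCopy_X4rel_of_hasFourCycle (h : HasFourCycle r) : ContainsCopy X4rel r := by
  obtain ⟨a, b, c, d, hab, hbc, hcd, hda⟩ := h
  have hac : a ≠ c := by
    rintro rfl
    exact hr.asymm hab hbc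
  have hbd : b ≠ d := by
    rintro rfl
    exact hr.asymm hbc hcd
  rcases hr.rel_or_rel hac with hac | hca <;> rcases hr.rel_or_rel hbd with hbd | hdb
  · exact hr.containsCopy_X4rel_of_chords hab hbc hcd hda hac hbd
  · exact hr.containsCopy_X4rel_of_chords hda hab hbc hcd hdb hac
  · exact hr.containsCopy_X4rel_of_chords hbc hcd hda hab hbd hca
  · exact hr.containsCopy_X4rel_of_chords hcd hda hab hbc hca hdb

theorem exists_triangle_of_reflTransGen {a b : V} (hab : r a b) (hba : ReflTransGen r b a) :
    ∃ x y, r a x ∧ r x y ∧ r y a := by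
  induction hba using ReflTransGen.head_induction_on with
  | refl => exact absurd hab (hr.irrefl a)
  | @head b c hbc _ ih =>
    have hca : c ≠ a := by
      rintro rfl
      exact hr.asymm hab hbc
    rcases hr.rel_or_rel hca with hca | hac
    · exact ⟨b, c, hab, hbc, hca⟩
    · exact ih hac

theorem hasFourCycle_of_dominated {a x y d : V} (hax : r a x) (hxy : r x y) (hya : r y a)
    (had : r a d) (hxd : r x d) (hyd : r y d) (hda : ReflTransGen r d a) : HasFourCycle r := by
  obtain ⟨p, q, ⟨hap, hxp, hyp⟩, hq, hpq⟩ :=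
    hda.exists_rel_of_not (P := fun w => r a w ∧ r x w ∧ r y w) ⟨had, hxd, hyd⟩
      (fun h => hr.irrefl a h.1)
  have back : ∀ t, r t p → ¬ r t q → r q t := fun t htp htq =>
    hr.rel_of_not_rel (fun h => hr.asymm hpq (h ▸ htp)) htq
  simp only [not_and_or] at hq
  rcases hq with haq | hxq | hyq
  · exact ⟨p, q, a, x, hpq, back a hap haq, hax, hxp⟩
  · exact ⟨p, q, x, y, hpq, back x hxp hxq, hxy, hyp⟩
  · exact ⟨p, q, y, a, hpq, back y hyp hyq, hya, hap⟩

theorem hasFourCycle_of_dominating {a x y d : V} (hax : r a x) (hxy : r x y) (hya : r y a)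
    (hda : r d a) (hdx : r d x) (hdy : r d y) (had : ReflTransGen r a d) : HasFourCycle r := by
  obtain ⟨p, q, s, t, hpq, hqs, hst, htp⟩ :=
    hr.swap.hasFourCycle_of_dominated (x := y) (y := x) hya hxy hax hda hdy hdx
      (reflTransGen_swap.2 had)
  exact ⟨p, t, s, q, htp, hst, hqs, hpq⟩

theorem hasFourCycle_of_triangle {a x y d : V} (hax : r a x) (hxy : r x y) (hya : r y a)
    (hda : d ≠ a) (hdx : d ≠ x) (hdy : d ≠ y) (hd : ReflTransGen r d a)
    (hd' : ReflTransGen r a d) : HasFourCycle r := by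
  rcases hr.rel_or_rel hda.symm with had | hda
  · rcases hr.rel_or_rel hdx.symm with hxd | hdx
    · rcases hr.rel_or_rel hdy.symm with hyd | hdy
      · exact hr.hasFourCycle_of_dominated hax hxy hya had hxd hyd hd
      · exact ⟨x, d, y, a, hxd, hdy, hya, hax⟩
    · exact ⟨a, d, x, y, had, hdx, hxy, hya⟩
  · rcases hr.rel_or_rel hdy.symm with hyd | hdy
    · exact ⟨y, d, a, x, hyd, hda, hax, hxy⟩
    · rcases hr.rel_or_rel hdx.symm with hxd | hdx
      · exact ⟨x, d, y, a, hxd, hdy, hya, hax⟩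
      · exact hr.hasFourCycle_of_dominating hax hxy hya hda hdx hdy hd'

theorem exists_triangle_mem_strongComponent {v : V} (h : 1 < (strongComponent r v).ncard) :
    ∃ a ∈ strongComponent r v, ∃ x y, r a x ∧ r x y ∧ r y a := by
  obtain ⟨b, hb, hbv⟩ :=
    Set.exists_mem_notMem_of_ncard_lt_ncard (s := {v}) (by simpa using h)
  rcases hr.rel_or_rel (Set.notMem_singleton_iff.1 hbv) with hbv | hvb
  · exact ⟨b, hb, hr.exists_triangle_of_reflTransGen hbv hb.2⟩
  · exact ⟨v, ⟨.refl, .refl⟩, hr.exists_triangle_of_reflTransGen hvb hb.1⟩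

theorem hasFourCycle_of_three_lt_ncard {v : V} (h : 3 < (strongComponent r v).ncard) :
    HasFourCycle r := by
  obtain ⟨a, ha, x, y, hax, hxy, hya⟩ :=
    hr.exists_triangle_mem_strongComponent (v := v) (by omega)
  have h3 : ({a, x, y} : Set V).ncard ≤ 3 := by
    classical
    rw [← Finset.coe_singleton, ← Finset.coe_insert, ← Finset.coe_insert, Set.ncard_coe_finset]
    exact Finset.card_le_three
  obtain ⟨d, hd, hdt⟩ := Set.exists_mem_notMem_of_ncard_lt_ncard (h3.trans_lt h)
  simp only [Set.mem_insert_iff, Set.mem_singleton_iff, not_or] at hdt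
  exact hr.hasFourCycle_of_triangle hax hxy hya hdt.1 hdt.2.1 hdt.2.2 (hd.1.trans ha.2)
    (ha.1.trans hd.2)

end IsTournament

end

/-- A tournament `G` contains no copy of `X₄` iff every strongly connected component of
`G` (the mutual-reachability class of a vertex) has at most three vertices. -/
theorem stmt_12 {V : Type*} [Fintype V] (r : V → V → Prop) (hr : IsTournament r) :
    (¬ ∃ s : Set V, ∃ e : Fin 4 ≃ s, ∀ i j : Fin 4, X4rel i j ↔ r (e i) (e j)) ↔
    ∀ v : V, Nat.card {u : V //
      Relation.ReflTransGen r u v ∧ Relation.ReflTransGen r v u} ≤ 3 := by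
  constructor
  · intro hX4 v
    by_contra! hv
    exact hX4 (hr.containsCopy_X4rel_of_hasFourCycle (hr.hasFourCycle_of_three_lt_ncard hv))
  · rintro hsmall hX4
    obtain ⟨v, hv⟩ := ContainsCopy.exists_card_le_ncard_strongComponent hX4
      (reflTransGen_of_forall_rel_add_one X4rel_add_one)
    have h3 : (strongComponent r v).ncard ≤ 3 := hsmall v
    rw [Nat.card_fin] at hv
    omega
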